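/- arXiv:2106.11936 — 2 statements merged into one kernel-verified Lean document; each statement's English description precedes it below -/
import Mathlib

section
/- Let Θ_T be a real n×s matrix whose Gram matrix Θ_Tᵀ Θ_T is invertible, and let Θ_{F,1},…,Θ_{F,m} ∈ ℝⁿ. Let ξ_T ∈ ℝˢ with ξ_{T,k} ≠ 0 for all k, ξ_F ∈ ℝᵐ, and γ ≥ 1. Assume |ξ_{F,j}| < |ξ_{T,k}| for every k ∈ {1,…,s} and j ∈ {1,…,m}. Define the rescaled matrix Θ̃_T whose k-th column is |ξ_{T,k}|^γ times the k-th column of Θ_T, and rescaled vectors Θ̃_{F,j} = |ξ_{F,j}|^γ · Θ_{F,j}. Then Θ̃_Tᵀ Θ̃_T is invertible and Δ(Θ̃,T) ≤ Δ(Θ,T). -/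
open Matrix BigOperators

/-- Proposition 1 of the paper: the adaptive-Lasso weight transformation
(rescaling the `k`-th relevant column by `|ξT k| ^ γ` and the `j`-th irrelevant
column by `|ξF j| ^ γ`) preserves invertibility of the Gram matrix and can only
decrease the irrepresentability quantity
`Δ(Θ,T) = max_j ‖(ΘTᵀΘT)⁻¹ΘTᵀ Θ_{F,j}‖₁`,
provided all relevant coefficients exceed all irrelevant ones in magnitude
and `γ ≥ 1`. -/
theorem adaptive_weights_decrease_irrepresentability
    {n s m : ℕ} (hm : 0 < m)
    (ThetaT : Matrix (Fin n) (Fin s) ℝ)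
    (ThetaF : Fin m → (Fin n → ℝ))
    (hGram : IsUnit (ThetaTᵀ * ThetaT).det)
    (ξT : Fin s → ℝ) (hξT : ∀ k, ξT k ≠ 0)
    (ξF : Fin m → ℝ)
    (γ : ℝ) (hγ : 1 ≤ γ)
    (hlt : ∀ (k : Fin s) (j : Fin m), |ξF j| < |ξT k|)
    (ThetaT' : Matrix (Fin n) (Fin s) ℝ)
    (hThetaT' : ∀ i k, ThetaT' i k = |ξT k| ^ γ * ThetaT i k)
    (ThetaF' : Fin m → (Fin n → ℝ))
    (hThetaF' : ∀ j i, ThetaF' j i = |ξF j| ^ γ * ThetaF j i) :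
    IsUnit (ThetaT'ᵀ * ThetaT').det ∧
    Finset.univ.sup' ⟨⟨0, hm⟩, Finset.mem_univ _⟩
        (fun j => ∑ k, |(((ThetaT'ᵀ * ThetaT')⁻¹ * ThetaT'ᵀ) *ᵥ ThetaF' j) k|) ≤
      Finset.univ.sup' ⟨⟨0, hm⟩, Finset.mem_univ _⟩
        (fun j => ∑ k, |(((ThetaTᵀ * ThetaT)⁻¹ * ThetaTᵀ) *ᵥ ThetaF j) k|) := by
  set d : Fin s → ℝ := fun k => |ξT k| ^ γ with hd
  have hdpos : ∀ k, 0 < d k := fun k =>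
    Real.rpow_pos_of_pos (abs_pos.mpr (hξT k)) γ
  set D : Matrix (Fin s) (Fin s) ℝ := Matrix.diagonal d with hDdef
  have hDdet : D.det = ∏ k, d k := Matrix.det_diagonal
  have hDunit : IsUnit D.det := by
    rw [hDdet]
    exact isUnit_iff_ne_zero.mpr (Finset.prod_ne_zero_iff.mpr
      fun k _ => (hdpos k).ne')
  have hT' : ThetaT' = ThetaT * D := by
    ext i k
    rw [hThetaT', hDdef, Matrix.mul_diagonal, mul_comm]
  set G : Matrix (Fin s) (Fin s) ℝ := ThetaTᵀ * ThetaT with hG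
  have hGram' : ThetaT'ᵀ * ThetaT' = D * G * D := by
    rw [hT', Matrix.transpose_mul, Matrix.diagonal_transpose, ← hDdef, hG]
    simp only [Matrix.mul_assoc]
  have hUnit' : IsUnit (ThetaT'ᵀ * ThetaT').det := by
    rw [hGram', Matrix.det_mul, Matrix.det_mul]
    exact (hDunit.mul hGram).mul hDunit
  refine ⟨hUnit', ?_⟩
  have hkey : (ThetaT'ᵀ * ThetaT')⁻¹ * ThetaT'ᵀ = D⁻¹ * (G⁻¹ * ThetaTᵀ) := by
    rw [hGram', hT', Matrix.transpose_mul, Matrix.diagonal_transpose,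
      Matrix.mul_inv_rev, Matrix.mul_inv_rev]
    rw [Matrix.mul_assoc, Matrix.mul_assoc, ← Matrix.mul_assoc D⁻¹ D,
      Matrix.nonsing_inv_mul D hDunit, Matrix.one_mul]
  have hDinv : D⁻¹ = Matrix.diagonal (fun k => (d k)⁻¹) := by
    apply Matrix.inv_eq_right_inv
    rw [hDdef, Matrix.diagonal_mul_diagonal]
    convert Matrix.diagonal_one with k
    exact mul_inv_cancel₀ (hdpos k).ne'
  have hF' : ∀ j, ThetaF' j = |ξF j| ^ γ • ThetaF j := by
    intro j; ext i; rw [hThetaF']; rfl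
  apply Finset.sup'_le
  intro j _
  refine le_trans ?_ (Finset.le_sup' _ (Finset.mem_univ j))
  apply Finset.sum_le_sum
  intro k _
  have hentry :
      (((ThetaT'ᵀ * ThetaT')⁻¹ * ThetaT'ᵀ) *ᵥ ThetaF' j) k
        = (d k)⁻¹ * (|ξF j| ^ γ * ((G⁻¹ * ThetaTᵀ) *ᵥ ThetaF j) k) := by
    rw [hkey, hF', Matrix.mulVec_smul, ← Matrix.mulVec_mulVec, hDinv]
    simp only [Pi.smul_apply, Matrix.mulVec_diagonal, smul_eq_mul]
    ring
  rw [hentry, abs_mul, abs_mul]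
  have h1 : |(d k)⁻¹| = (d k)⁻¹ := abs_of_pos (inv_pos.mpr (hdpos k))
  have h2 : |(|ξF j| ^ γ)| = |ξF j| ^ γ :=
    abs_of_nonneg (Real.rpow_nonneg (abs_nonneg _) γ)
  rw [h1, h2, ← mul_assoc]
  have hratio : (d k)⁻¹ * |ξF j| ^ γ ≤ 1 := by
    rw [inv_mul_le_iff₀ (hdpos k), mul_one, hd]
    exact Real.rpow_le_rpow (abs_nonneg _) (hlt k j).le (le_trans zero_le_one hγ)
  calc (d k)⁻¹ * |ξF j| ^ γ * |((G⁻¹ * ThetaTᵀ) *ᵥ ThetaF j) k|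
      ≤ 1 * |((G⁻¹ * ThetaTᵀ) *ᵥ ThetaF j) k| := by
        apply mul_le_mul_of_nonneg_right hratio (abs_nonneg _)
    _ = |(((ThetaTᵀ * ThetaT)⁻¹ * ThetaTᵀ) *ᵥ ThetaF j) k| := by rw [one_mul, hG]
end

section
/- Let Θ_T be a real n×s matrix whose Gram matrix Θ_Tᵀ Θ_T is invertible, let Θ_{F,j} ∈ ℝⁿ, and let β_j = (Θ_Tᵀ Θ_T)⁻¹ Θ_Tᵀ Θ_{F,j}. Let ξ_T ∈ ℝˢ with all ξ_{T,k} ≠ 0, ξ_{F,j} ∈ ℝ, and γ ≥ 1, and define Θ̃_T with k-th column |ξ_{T,k}|^γ times the k-th column of Θ_T and Θ̃_{F,j} = |ξ_{F,j}|^γ · Θ_{F,j}. Then the k-th component of β̃_j = (Θ̃_Tᵀ Θ̃_T)⁻¹ Θ̃_Tᵀ Θ̃_{F,j} equals |ξ_{F,j}/ξ_{T,k}|^γ · (β_j)_k; in particular, if |ξ_{F,j}| ≤ |ξ_{T,k}| for all k, then |(β̃_j)_k| ≤ |(β_j)_k| for every k. -/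
open Matrix BigOperators

/-- Inside Proposition 1 of the paper: the adaptive weight transformation
shrinks the `k`-th least-squares projection coefficient of the `j`-th
irrelevant column onto the relevant columns by the factor `|ξF j / ξT k| ^ γ`;
in particular, if `|ξF j| ≤ |ξT k|` for all `k`, each coefficient can only
decrease in absolute value. -/
theorem adaptive_weights_shrink_projections
    {n s : ℕ}
    (ThetaT : Matrix (Fin n) (Fin s) ℝ)
    (hGram : IsUnit (ThetaTᵀ * ThetaT).det)
    (ThetaFj : Fin n → ℝ)
    (ξT : Fin s → ℝ) (hξT : ∀ k, ξT k ≠ 0)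
    (ξFj : ℝ)
    (γ : ℝ) (hγ : 1 ≤ γ)
    (ThetaT' : Matrix (Fin n) (Fin s) ℝ)
    (hThetaT' : ∀ i k, ThetaT' i k = |ξT k| ^ γ * ThetaT i k)
    (ThetaFj' : Fin n → ℝ)
    (hThetaFj' : ∀ i, ThetaFj' i = |ξFj| ^ γ * ThetaFj i) :
    (∀ k, (((ThetaT'ᵀ * ThetaT')⁻¹ * ThetaT'ᵀ) *ᵥ ThetaFj') k
        = |ξFj / ξT k| ^ γ * ((((ThetaTᵀ * ThetaT)⁻¹ * ThetaTᵀ) *ᵥ ThetaFj) k)) ∧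
    ((∀ k, |ξFj| ≤ |ξT k|) →
      ∀ k, |(((ThetaT'ᵀ * ThetaT')⁻¹ * ThetaT'ᵀ) *ᵥ ThetaFj') k|
        ≤ |(((ThetaTᵀ * ThetaT)⁻¹ * ThetaTᵀ) *ᵥ ThetaFj) k|) := by
  have hpos : ∀ k, (0:ℝ) < |ξT k| ^ γ := fun k =>
    Real.rpow_pos_of_pos (abs_pos.mpr (hξT k)) γ
  set D : Matrix (Fin s) (Fin s) ℝ := Matrix.diagonal (fun k => |ξT k| ^ γ) with hDdef
  have hD : ThetaT' = ThetaT * D := by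
    ext i k
    simp [hDdef, Matrix.mul_diagonal, hThetaT', mul_comm]
  have hDdet : IsUnit D.det := by
    rw [hDdef, Matrix.det_diagonal]
    exact (Finset.prod_pos (fun k _ => hpos k)).ne'.isUnit
  have hDT : Dᵀ = D := Matrix.diagonal_transpose _
  have hDinv : D⁻¹ * D = 1 := Matrix.nonsing_inv_mul D hDdet
  have hM : (ThetaT'ᵀ * ThetaT')⁻¹ * ThetaT'ᵀ
      = D⁻¹ * (((ThetaTᵀ * ThetaT)⁻¹ * ThetaTᵀ)) := by
    rw [hD, Matrix.transpose_mul, hDT]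
    have h1 : D * ThetaTᵀ * (ThetaT * D) = D * (ThetaTᵀ * ThetaT) * D := by
      simp only [Matrix.mul_assoc]
    rw [h1, Matrix.mul_inv_rev, Matrix.mul_inv_rev]
    calc D⁻¹ * ((ThetaTᵀ * ThetaT)⁻¹ * D⁻¹) * (D * ThetaTᵀ)
        = D⁻¹ * ((ThetaTᵀ * ThetaT)⁻¹ * ((D⁻¹ * D) * ThetaTᵀ)) := by
          simp only [Matrix.mul_assoc]
      _ = D⁻¹ * ((ThetaTᵀ * ThetaT)⁻¹ * ThetaTᵀ) := by rw [hDinv, Matrix.one_mul]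
  have hFj : ThetaFj' = |ξFj| ^ γ • ThetaFj := by
    ext i; simp [hThetaFj']
  have hDinvdiag : D⁻¹ = Matrix.diagonal (fun k => (|ξT k| ^ γ)⁻¹) := by
    apply Matrix.inv_eq_left_inv
    rw [hDdef, Matrix.diagonal_mul_diagonal]
    convert Matrix.diagonal_one with k
    exact inv_mul_cancel₀ (hpos k).ne'
  have habs : (0:ℝ) ≤ |ξFj| := abs_nonneg _
  have key : ∀ k, (((ThetaT'ᵀ * ThetaT')⁻¹ * ThetaT'ᵀ) *ᵥ ThetaFj') k
      = |ξFj / ξT k| ^ γ * ((((ThetaTᵀ * ThetaT)⁻¹ * ThetaTᵀ) *ᵥ ThetaFj) k) := by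
    intro k
    rw [hM, hFj, hDinvdiag, Matrix.mulVec_smul, ← Matrix.mulVec_mulVec]
    have : |ξFj / ξT k| ^ γ = |ξFj| ^ γ * (|ξT k| ^ γ)⁻¹ := by
      rw [abs_div, Real.div_rpow habs (abs_nonneg _), div_eq_mul_inv]
    simp only [Pi.smul_apply, Matrix.mulVec_diagonal, this, smul_eq_mul]
    ring
  refine ⟨key, fun hle k => ?_⟩
  rw [key k, abs_mul]
  have h1 : |ξFj / ξT k| ≤ 1 := by
    rw [abs_div, div_le_one (abs_pos.mpr (hξT k))]
    exact hle k
  have h2 : |(|ξFj / ξT k| ^ γ)| = |ξFj / ξT k| ^ γ :=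
    abs_of_nonneg (Real.rpow_nonneg (abs_nonneg _) _)
  rw [h2]
  calc |ξFj / ξT k| ^ γ * |(((ThetaTᵀ * ThetaT)⁻¹ * ThetaTᵀ) *ᵥ ThetaFj) k|
      ≤ 1 * |(((ThetaTᵀ * ThetaT)⁻¹ * ThetaTᵀ) *ᵥ ThetaFj) k| := by
        apply mul_le_mul_of_nonneg_right _ (abs_nonneg _)
        exact Real.rpow_le_one (abs_nonneg _) h1 (le_trans zero_le_one hγ)
    _ = _ := one_mul _
end
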